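/- Let S₁₂, …, S₁ₙ be bounded operators on a complex Hilbert space H. The numerical radius of the n×n block operator matrix whose first row is (O, S₁₂, …, S₁ₙ), whose first column is (O, S₁₂, …, S₁ₙ)ᵀ, and all other entries zero, is at most √(∑_{k=2}^{n} w(S₁ₖ)²). -/

import Mathlib

noncomputable def numRadius {E : Type*} [NormedAddCommGroup E] [InnerProductSpace ℂ E]
    (T : E →L[ℂ] E) : ℝ :=
  sSup {r : ℝ | ∃ x : E, ‖x‖ = 1 ∧ r = ‖(inner ℂ (T x) x : ℂ)‖}

noncomputable def blockOp {H : Type*} [NormedAddCommGroup H] [InnerProductSpace ℂ H]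
    (n : ℕ) (M : Fin n → Fin n → H →L[ℂ] H) :
    (PiLp 2 fun _ : Fin n => H) →L[ℂ] (PiLp 2 fun _ : Fin n => H) :=
  (PiLp.continuousLinearEquiv 2 ℂ (fun _ : Fin n => H)).symm.toContinuousLinearMap ∘L
    (ContinuousLinearMap.pi fun i => ∑ j, (M i j).comp (ContinuousLinearMap.proj j)) ∘L
    (PiLp.continuousLinearEquiv 2 ℂ (fun _ : Fin n => H)).toContinuousLinearMap

/-!
For a unit vector `x = (x₀, x₁, …)`, only the first row and column of the block operator
contribute, so `⟪T x, x⟫ = ∑_{k ≠ 0} (⟪S_k x_k, x₀⟫ + ⟪S_k x₀, x_k⟫)`. By polarization each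
summand is bounded by `2 w(S_k) ‖x_k‖ ‖x₀‖`, and Cauchy–Schwarz followed by
`2ab ≤ a² + b² = ‖x‖² = 1` gives the bound `√(∑ w(S_k)²)`.
-/

open Finset
open scoped InnerProductSpace

section NumRadius

variable {E : Type*} [NormedAddCommGroup E] [InnerProductSpace ℂ E]

lemma numRadius_bddAbove (T : E →L[ℂ] E) :
    BddAbove {r : ℝ | ∃ x : E, ‖x‖ = 1 ∧ r = ‖⟪T x, x⟫_ℂ‖} := by
  refine ⟨‖T‖, ?_⟩
  rintro r ⟨x, hx, rfl⟩
  calc ‖⟪T x, x⟫_ℂ‖ ≤ ‖T x‖ * ‖x‖ := norm_inner_le_norm _ _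
    _ ≤ ‖T‖ * ‖x‖ * ‖x‖ := by gcongr; exact T.le_opNorm x
    _ = ‖T‖ := by rw [hx]; ring

lemma numRadius_nonneg (T : E →L[ℂ] E) : 0 ≤ numRadius T :=
  Real.sSup_nonneg (by rintro r ⟨x, -, rfl⟩; positivity)

lemma norm_inner_self_le_numRadius_mul (T : E →L[ℂ] E) (z : E) :
    ‖⟪T z, z⟫_ℂ‖ ≤ numRadius T * ‖z‖ ^ 2 := by
  rcases eq_or_ne z 0 with rfl | hz
  · simp
  set u : E := (‖z‖ : ℂ)⁻¹ • z
  have hu : ‖u‖ = 1 := norm_smul_inv_norm hz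
  have hzu : z = (‖z‖ : ℂ) • u := by
    rw [smul_smul, mul_inv_cancel₀ (by exact_mod_cast norm_ne_zero_iff.mpr hz), one_smul]
  have hTu : ‖⟪T u, u⟫_ℂ‖ ≤ numRadius T := le_csSup (numRadius_bddAbove T) ⟨u, hu, rfl⟩
  calc ‖⟪T z, z⟫_ℂ‖ = ‖⟪T u, u⟫_ℂ‖ * ‖z‖ ^ 2 := by
        conv_lhs => rw [hzu]
        simp only [map_smul, inner_smul_left, inner_smul_right, Complex.conj_ofReal, norm_mul,
          Complex.norm_real, norm_norm]
        ring
    _ ≤ numRadius T * ‖z‖ ^ 2 := by gcongr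

lemma norm_inner_add_inner_le_numRadius_mul_add (T : E →L[ℂ] E) (u v : E) :
    ‖⟪T u, v⟫_ℂ + ⟪T v, u⟫_ℂ‖ ≤ numRadius T * (‖u‖ ^ 2 + ‖v‖ ^ 2) := by
  have polarization : ⟪T (u + v), u + v⟫_ℂ - ⟪T (u - v), u - v⟫_ℂ
      = 2 * (⟪T u, v⟫_ℂ + ⟪T v, u⟫_ℂ) := by
    simp only [map_add, map_sub, inner_add_left, inner_add_right, inner_sub_left,
      inner_sub_right]
    ring
  have parallelogram : ‖u + v‖ ^ 2 + ‖u - v‖ ^ 2 = 2 * (‖u‖ ^ 2 + ‖v‖ ^ 2) := by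
    simpa only [sq] using parallelogram_law_with_norm ℂ u v
  have h := (norm_sub_le (⟪T (u + v), u + v⟫_ℂ) (⟪T (u - v), u - v⟫_ℂ)).trans
    (add_le_add (norm_inner_self_le_numRadius_mul T _) (norm_inner_self_le_numRadius_mul T _))
  rw [polarization, norm_mul, Complex.norm_two, ← mul_add, parallelogram] at h
  linarith

lemma norm_inner_add_inner_le_two_mul_numRadius (T : E →L[ℂ] E) (u v : E) :
    ‖⟪T u, v⟫_ℂ + ⟪T v, u⟫_ℂ‖ ≤ 2 * numRadius T * (‖u‖ * ‖v‖) := by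
  rcases eq_or_ne u 0 with rfl | hu
  · simp
  rcases eq_or_ne v 0 with rfl | hv
  · simp
  have huv : 0 < ‖u‖ * ‖v‖ := mul_pos (norm_pos_iff.mpr hu) (norm_pos_iff.mpr hv)
  -- rescale `u` and `v` to a common norm `‖u‖ * ‖v‖`
  have h := norm_inner_add_inner_le_numRadius_mul_add T (((‖v‖ : ℝ) : ℂ) • u)
    (((‖u‖ : ℝ) : ℂ) • v)
  simp only [map_smul, inner_smul_left, inner_smul_right, Complex.conj_ofReal, norm_smul,
    Complex.norm_real, norm_norm] at h
  have factor : (‖u‖ : ℂ) * (‖v‖ * ⟪T u, v⟫_ℂ) + ‖v‖ * (‖u‖ * ⟪T v, u⟫_ℂ)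
      = ((‖u‖ * ‖v‖ : ℝ) : ℂ) * (⟪T u, v⟫_ℂ + ⟪T v, u⟫_ℂ) := by
    push_cast; ring
  rw [factor, norm_mul, Complex.norm_real, Real.norm_of_nonneg huv.le] at h
  refine le_of_mul_le_mul_left (h.trans_eq ?_) huv
  ring

end NumRadius

section BlockOp

variable {H : Type*} [NormedAddCommGroup H] [InnerProductSpace ℂ H] {n : ℕ}

lemma blockOp_apply (M : Fin n → Fin n → H →L[ℂ] H) (x : PiLp 2 fun _ : Fin n => H)
    (i : Fin n) : blockOp n M x i = ∑ j, M i j (x j) := by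
  simp [blockOp]

lemma inner_blockOp_apply_self (M : Fin n → Fin n → H →L[ℂ] H)
    (x : PiLp 2 fun _ : Fin n => H) :
    ⟪blockOp n M x, x⟫_ℂ = ∑ i, ∑ j, ⟪M i j (x j), x i⟫_ℂ := by
  simp only [PiLp.inner_apply, blockOp_apply, sum_inner]

variable [NeZero n]

def arrowMatrix (S : Fin n → H →L[ℂ] H) : Fin n → Fin n → H →L[ℂ] H :=
  fun i j => if i = 0 ∧ j ≠ 0 then S j else if j = 0 ∧ i ≠ 0 then S i else 0

lemma inner_blockOp_arrowMatrix_apply_self (S : Fin n → H →L[ℂ] H)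
    (x : PiLp 2 fun _ : Fin n => H) :
    ⟪blockOp n (arrowMatrix S) x, x⟫_ℂ
      = ∑ k ∈ univ.erase 0, (⟪S k (x k), x 0⟫_ℂ + ⟪S k (x 0), x k⟫_ℂ) := by
  have first_row : ∑ j, ⟪arrowMatrix S 0 j (x j), x 0⟫_ℂ
      = ∑ k ∈ univ.erase 0, ⟪S k (x k), x 0⟫_ℂ := by
    have off_diagonal : ∀ k ∈ univ.erase 0,
        ⟪arrowMatrix S 0 k (x k), x 0⟫_ℂ = ⟪S k (x k), x 0⟫_ℂ := fun k hk => by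
      simp [arrowMatrix, ne_of_mem_erase hk]
    rw [← add_sum_erase _ _ (mem_univ 0), sum_congr rfl off_diagonal]
    simp [arrowMatrix]
  have other_row (i : Fin n) (hi : i ∈ univ.erase 0) :
      ∑ j, ⟪arrowMatrix S i j (x j), x i⟫_ℂ = ⟪S i (x 0), x i⟫_ℂ := by
    rw [sum_eq_single 0 (fun j _ hj => by simp [arrowMatrix, ne_of_mem_erase hi, hj])
      (by simp)]
    simp [arrowMatrix, ne_of_mem_erase hi]
  rw [inner_blockOp_apply_self, ← add_sum_erase _ _ (mem_univ 0), first_row,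
    sum_congr rfl other_row, sum_add_distrib]

end BlockOp

lemma PiLp.norm_sq_eq_norm_sq_add_sum_erase {ι : Type*} [Fintype ι] [DecidableEq ι]
    {β : ι → Type*} [∀ i, SeminormedAddCommGroup (β i)] (x : PiLp 2 β) (i : ι) :
    ‖x‖ ^ 2 = ‖x i‖ ^ 2 + ∑ k ∈ univ.erase i, ‖x k‖ ^ 2 := by
  rw [PiLp.norm_sq_eq_of_L2, add_sum_erase _ (fun k => ‖x k‖ ^ 2) (mem_univ i)]

lemma two_mul_sum_mul_le_sqrt_sum_sq_mul {ι : Type*} (s : Finset ι) (w b : ι → ℝ) {a : ℝ}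
    (ha : 0 ≤ a) : ∑ k ∈ s, 2 * w k * (b k * a)
      ≤ √(∑ k ∈ s, w k ^ 2) * (a ^ 2 + ∑ k ∈ s, b k ^ 2) := by
  set W := √(∑ k ∈ s, w k ^ 2)
  set B := √(∑ k ∈ s, b k ^ 2)
  have hB : B ^ 2 = ∑ k ∈ s, b k ^ 2 := Real.sq_sqrt (sum_nonneg fun k _ => sq_nonneg _)
  have hW : 0 ≤ W := Real.sqrt_nonneg _
  calc ∑ k ∈ s, 2 * w k * (b k * a) = 2 * a * ∑ k ∈ s, w k * b k := by
        rw [mul_sum]; exact sum_congr rfl fun k _ => by ring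
    _ ≤ 2 * a * (W * B) := by gcongr; exact Real.sum_mul_le_sqrt_mul_sqrt s w b
    _ ≤ W * (a ^ 2 + B ^ 2) := by nlinarith [sq_nonneg (a - B)]
    _ = W * (a ^ 2 + ∑ k ∈ s, b k ^ 2) := by rw [hB]

variable {H : Type*} [NormedAddCommGroup H] [InnerProductSpace ℂ H]
theorem stmt17 (n : ℕ) [NeZero n] (S : Fin n → H →L[ℂ] H) :
    numRadius (blockOp n (fun i j =>
        if i = 0 ∧ j ≠ 0 then S j else if j = 0 ∧ i ≠ 0 then S i else 0)) ≤
      Real.sqrt (∑ k ∈ Finset.univ.erase (0 : Fin n), numRadius (S k) ^ 2) := by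
  change numRadius (blockOp n (arrowMatrix S)) ≤ _
  refine Real.sSup_le ?_ (Real.sqrt_nonneg _)
  rintro r ⟨x, hx, rfl⟩
  have hx' : ‖x 0‖ ^ 2 + ∑ k ∈ univ.erase 0, ‖x k‖ ^ 2 = 1 := by
    rw [← PiLp.norm_sq_eq_norm_sq_add_sum_erase, hx, one_pow]
  calc ‖⟪blockOp n (arrowMatrix S) x, x⟫_ℂ‖
      = ‖∑ k ∈ univ.erase 0, (⟪S k (x k), x 0⟫_ℂ + ⟪S k (x 0), x k⟫_ℂ)‖ := by
        rw [inner_blockOp_arrowMatrix_apply_self]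
    _ ≤ ∑ k ∈ univ.erase 0, 2 * numRadius (S k) * (‖x k‖ * ‖x 0‖) :=
        (norm_sum_le _ _).trans (sum_le_sum fun k _ =>
          norm_inner_add_inner_le_two_mul_numRadius (S k) (x k) (x 0))
    _ ≤ √(∑ k ∈ univ.erase 0, numRadius (S k) ^ 2) *
          (‖x 0‖ ^ 2 + ∑ k ∈ univ.erase 0, ‖x k‖ ^ 2) :=
        two_mul_sum_mul_le_sqrt_sum_sq_mul _ _ _ (norm_nonneg _)
    _ = √(∑ k ∈ univ.erase 0, numRadius (S k) ^ 2) := by rw [hx', mul_one]
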